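/- arXiv:1511.04853 — 10 statements merged into one kernel-verified Lean document; each statement's English description precedes it below -/
import Mathlib

section
/- Every finite chordal graph is either complete or has at least two non-adjacent simplicial vertices (Dirac's lemma). -/
/-!
Pick non-adjacent vertices `v` and `c`. Let `C` be the component of `c` in `G` minus the closed
neighbourhood of `v`, and `K` the set of neighbours of `v` adjacent to `C`; every edge leaving
`C` ends in `K`. Chordality makes `K` a clique: a shortest walk through `C` between two
non-adjacent vertices of `K`, closed up through `v`, would be a chordless cycle of length at
least four. By induction the graphs induced on `C ∪ K` and on the complement of `C` are complete
or have two non-adjacent simplicial vertices, so, `K` being a clique, each has a simplicial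
vertex off `K`, which is simplicial in `G` as its whole neighbourhood lies in the smaller graph.
The vertex found in `C` and the one outside `C ∪ K` are non-adjacent.
-/

variable {V : Type*}

/-- A vertex is simplicial if its neighborhood induces a complete subgraph. -/
def IsSimplicialVertex (G : SimpleGraph V) (v : V) : Prop :=
  ∀ a b, G.Adj v a → G.Adj v b → a ≠ b → G.Adj a b

/-- `G` is chordal: every cycle of length at least four has a chord, i.e. an edge of `G`
joining two vertices of the cycle which is not an edge of the cycle. -/
def IsChordalGraph (G : SimpleGraph V) : Prop :=
  ∀ (u : V) (c : G.Walk u u), c.IsCycle → 4 ≤ c.length →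
    ∃ a b, a ∈ c.support ∧ b ∈ c.support ∧ G.Adj a b ∧ s(a, b) ∉ c.edges

open SimpleGraph

namespace SimpleGraph.Walk

variable {G : SimpleGraph V} {u v : V}

theorem mem_edges_of_adj_of_forall_length_le {p : G.Walk u v}
    (hmin : ∀ q : G.Walk u v, q.support ⊆ p.support → p.length ≤ q.length)
    {a b : V} (ha : a ∈ p.support) (hb : b ∈ p.support) (hab : G.Adj a b) :
    s(a, b) ∈ p.edges := by
  obtain ⟨i, rfl, hi⟩ := mem_support_iff_exists_getVert.mp ha
  obtain ⟨j, rfl, hj⟩ := mem_support_iff_exists_getVert.mp hb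
  clear ha hb
  wlog hij : i ≤ j generalizing i j
  · rw [Sym2.eq_swap]
    exact this j hj i hi hab.symm (by omega)
  obtain rfl | hj' : j = i + 1 ∨ i + 1 < j := by
    rcases hij.eq_or_lt with rfl | h
    · exact absurd rfl hab.ne
    · omega
  · exact p.mk_mem_edges_iff_exists.mpr ⟨i, by omega, rfl⟩
  · have hshort := hmin ((p.take i).append (cons hab (p.drop j))) (by
      intro z hz
      simp only [support_append, support_cons, List.tail_cons, List.mem_append,
        support_take, drop_support_eq_support_drop_min] at hz
      exact hz.elim List.mem_of_mem_take List.mem_of_mem_drop)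
    simp only [length_append, take_length, length_cons, drop_length] at hshort
    omega

theorem exists_isPath_forall_length_le (w : G.Walk u v) :
    ∃ p : G.Walk u v, p.IsPath ∧ p.support ⊆ w.support ∧
      ∀ q : G.Walk u v, q.support ⊆ p.support → p.length ≤ q.length := by
  classical
  obtain ⟨p, hpw, hmin⟩ := (measure fun q : G.Walk u v ↦ q.length).wf.has_min
    {q | q.support ⊆ w.support} ⟨w, List.Subset.refl _⟩
  have hbw : p.bypass.support ⊆ w.support := List.Subset.trans p.support_bypass_subset_support hpw
  refine ⟨p.bypass, p.bypass_isPath, hbw, fun q hq ↦ ?_⟩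
  have hpq : ¬ q.length < p.length := hmin q (List.Subset.trans hq hbw)
  have := p.length_bypass_le_length
  omega

end SimpleGraph.Walk

section

variable {G : SimpleGraph V}

theorem IsChordalGraph.comap {W : Type*} {H : SimpleGraph W} (f : H ↪g G)
    (hG : IsChordalGraph G) : IsChordalGraph H := by
  intro u c hc hlen
  obtain ⟨a, b, ha, hb, hab, hnot⟩ :=
    hG _ (c.map f.toHom) (hc.map f.injective) (by rwa [Walk.length_map])
  simp only [Walk.support_map, List.mem_map] at ha hb
  obtain ⟨a, ha, rfl⟩ := ha
  obtain ⟨b, hb, rfl⟩ := hb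
  refine ⟨a, b, ha, hb, f.map_adj_iff.mp hab, fun hmem ↦ hnot ?_⟩
  rw [Walk.edges_map]
  exact List.mem_map_of_mem hmem

theorem IsChordalGraph.adj_of_walk_avoiding_nbhd (hG : IsChordalGraph G)
    {v x y : V} (hvx : G.Adj v x) (hvy : G.Adj v y) (hxy : x ≠ y) (w : G.Walk x y)
    (hw : ∀ z ∈ w.support, z = x ∨ z = y ∨ (z ≠ v ∧ ¬ G.Adj v z)) : G.Adj x y := by
  by_contra hnxy
  obtain ⟨p, hp, hpw, hmin⟩ := w.exists_isPath_forall_length_le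
  have hnbr : ∀ z ∈ p.support, G.Adj v z → z = x ∨ z = y := fun z hz hvz ↦ by
    rcases hw z (hpw hz) with h | h | h
    exacts [.inl h, .inr h, absurd hvz h.2]
  have hvp : v ∉ p.support := fun hv ↦ by
    rcases hw v (hpw hv) with h | h | h
    exacts [hvx.ne h, hvy.ne h, h.1 rfl]
  have hlen : 2 ≤ p.length := by
    have h0 : p.length ≠ 0 := fun h ↦ hxy (Walk.eq_of_length_eq_zero h)
    have h1 : p.length ≠ 1 := fun h ↦ hnxy (Walk.adj_of_length_eq_one h)
    omega
  let c : G.Walk x x := .cons hvx.symm (.cons hvy p.reverse)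
  have hc : c.IsCycle := by
    refine (Walk.cons_isCycle_iff _ _).mpr ⟨?_, ?_⟩
    · exact hp.reverse.cons (by simpa using hvp)
    · simp only [Walk.edges_cons, List.mem_cons, Sym2.eq, Sym2.rel_iff', Prod.mk.injEq,
        Prod.swap_prod_mk, Walk.edges_reverse, List.mem_reverse, not_or]
      exact ⟨⟨fun h ↦ hxy (h.1.trans h.2), fun h ↦ hxy h.1⟩,
        fun h ↦ hvp (p.snd_mem_support_of_mem_edges h)⟩
  obtain ⟨a, b, ha, hb, hab, hnot⟩ := hG x c hc (by simp [c]; omega)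
  have hsupp : ∀ z ∈ c.support, z = v ∨ z ∈ p.support := by
    simp only [c, Walk.support_cons, Walk.support_reverse, List.mem_cons, List.mem_reverse]
    rintro z (rfl | rfl | hz)
    exacts [.inr p.start_mem_support, .inl rfl, .inr hz]
  have hspoke : ∀ z ∈ p.support, G.Adj v z → s(v, z) ∈ c.edges := fun z hz hvz ↦ by
    rcases hnbr z hz hvz with rfl | rfl <;> simp [c, Sym2.eq_swap]
  have hrim : ∀ e ∈ p.edges, e ∈ c.edges := fun e he ↦ by simp [c, he]
  rcases hsupp a ha with rfl | hap <;> rcases hsupp b hb with rfl | hbp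
  · exact hab.ne rfl
  · exact hnot (hspoke b hbp hab)
  · exact hnot (Sym2.eq_swap ▸ hspoke a hap hab.symm)
  · exact hnot (hrim _ (Walk.mem_edges_of_adj_of_forall_length_le hmin hap hbp hab))

theorem IsChordalGraph.exists_isClique_separating (hG : IsChordalGraph G)
    {v c : V} (hvc : v ≠ c) (hnadj : ¬ G.Adj v c) :
    ∃ C K : Set V, G.IsClique K ∧ c ∈ C ∧ c ∉ K ∧ v ∉ C ∪ K ∧
      ∀ z ∈ C, ∀ t, G.Adj z t → t ∈ C ∪ K := by
  set T : Set V := {t | t ≠ v ∧ ¬ G.Adj v t}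
  set C : Set V := {z | ∃ w : G.Walk c z, ∀ t ∈ w.support, t ∈ T}
  set K : Set V := {s | G.Adj v s ∧ ∃ z ∈ C, G.Adj s z}
  have hCT : C ⊆ T := fun z ⟨w, hw⟩ ↦ hw z w.end_mem_support
  refine ⟨C, K, ?_, ⟨.nil, by simpa [T] using ⟨hvc.symm, hnadj⟩⟩, fun h ↦ hnadj h.1, ?_, ?_⟩
  · rintro x ⟨hvx, p, ⟨wp, hwp⟩, hxp⟩ y ⟨hvy, q, ⟨wq, hwq⟩, hyq⟩ hxy
    refine hG.adj_of_walk_avoiding_nbhd hvx hvy hxy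
      (.cons hxp (wp.reverse.append (wq.concat hyq.symm))) fun z hz ↦ ?_
    simp only [Walk.support_cons, Walk.support_append, Walk.support_reverse, Walk.support_concat,
      List.mem_cons, List.mem_append, List.mem_reverse] at hz
    rcases hz with rfl | hz | hz
    · exact .inl rfl
    · exact .inr (.inr (hwp z hz))
    · rcases List.mem_append.mp (List.mem_of_mem_tail hz) with hz | hz
      exacts [.inr (.inr (hwq z hz)), .inr (.inl (List.mem_singleton.mp hz))]
  · rintro (h | h)
    exacts [(hCT h).1 rfl, G.irrefl h.1]
  · rintro z ⟨w, hw⟩ t hzt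
    by_cases ht : t ∈ T
    · refine .inl ⟨w.concat hzt, fun s hs ↦ ?_⟩
      simp only [Walk.support_concat, List.mem_append, List.mem_singleton] at hs
      rcases hs with hs | rfl
      exacts [hw s hs, ht]
    · have hvt : G.Adj v t := by
        by_contra hvt
        exact ht ⟨fun htv ↦ (hCT ⟨w, hw⟩).2 (htv ▸ hzt.symm), hvt⟩
      exact .inr ⟨hvt, z, ⟨w, hw⟩, hzt.symm⟩

def IsCompleteOrHasNonadjSimplicialPair (G : SimpleGraph V) : Prop :=
  (∀ a b : V, a ≠ b → G.Adj a b) ∨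
    ∃ u v : V, u ≠ v ∧ ¬ G.Adj u v ∧ IsSimplicialVertex G u ∧ IsSimplicialVertex G v

theorem IsSimplicialVertex.of_induce {T : Set V} {u : T}
    (hnbr : ∀ t, G.Adj u t → t ∈ T) (hu : IsSimplicialVertex (G.induce T) u) :
    IsSimplicialVertex G u := fun a b ha hb hab ↦
  hu ⟨a, hnbr a ha⟩ ⟨b, hnbr b hb⟩ ha hb (by simpa [Subtype.ext_iff] using hab)

theorem exists_isSimplicialVertex_mem {C K : Set V} (hK : G.IsClique K)
    (hC : C.Nonempty) (hclosed : ∀ z ∈ C, ∀ t, G.Adj z t → t ∈ C ∪ K)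
    (hCK : IsCompleteOrHasNonadjSimplicialPair (G.induce (C ∪ K))) :
    ∃ u ∈ C, IsSimplicialVertex G u := by
  have hlift : ∀ u : ↥(C ∪ K), (u : V) ∈ C → IsSimplicialVertex (G.induce (C ∪ K)) u →
      IsSimplicialVertex G u := fun u hu ↦ IsSimplicialVertex.of_induce (hclosed u hu)
  rcases hCK with hcomp | ⟨u, u', hne, hnadj, hu, hu'⟩
  · obtain ⟨u, hu⟩ := hC
    exact ⟨u, hu, hlift ⟨u, .inl hu⟩ hu fun a b _ _ hab ↦ hcomp a b hab⟩
  · have : (u : V) ∈ C ∨ (u' : V) ∈ C := by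
      by_contra! h
      exact hnadj (hK (u.2.resolve_left h.1) (u'.2.resolve_left h.2) (Subtype.coe_ne_coe.mpr hne))
    rcases this with h | h
    exacts [⟨u, h, hlift u h hu⟩, ⟨u', h, hlift u' h hu'⟩]

theorem IsChordalGraph.isCompleteOrHasNonadjSimplicialPair [Finite V]
    (hG : IsChordalGraph G) : IsCompleteOrHasNonadjSimplicialPair G := by
  induction hn : Nat.card V using Nat.strong_induction_on generalizing V with
  | _ n ih =>
  have hsmaller : ∀ (T : Set V) (x : V), x ∉ T →
      IsCompleteOrHasNonadjSimplicialPair (G.induce T) := fun T x hx ↦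
    ih _ (hn ▸ Finite.card_subtype_lt hx) (hG.comap (Embedding.induce T)) rfl
  refine or_iff_not_imp_left.mpr fun hcomp ↦ ?_
  push Not at hcomp
  obtain ⟨v, c, hvc, hnadj⟩ := hcomp
  obtain ⟨C, K, hK, hcC, hcK, hv, hC⟩ := hG.exists_isClique_separating hvc hnadj
  have hD : ∀ z ∈ (C ∪ K)ᶜ, ∀ t, G.Adj z t → t ∈ (C ∪ K)ᶜ ∪ K := fun z hz t hzt ↦ by
    by_cases htK : t ∈ K
    · exact .inr htK
    · exact .inl fun htCK ↦ hz (hC t (htCK.resolve_right htK) z hzt.symm)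
  obtain ⟨u, hu, hus⟩ := exists_isSimplicialVertex_mem hK ⟨c, hcC⟩ hC (hsmaller _ v hv)
  obtain ⟨u', hu', hus'⟩ :=
    exists_isSimplicialVertex_mem hK ⟨v, hv⟩ hD (hsmaller _ c (by simp [hcC, hcK]))
  refine ⟨u, u', ?_, fun h ↦ hu' (hC u hu u' h), hus, hus'⟩
  rintro rfl
  exact hu' (.inl hu)

end

/-- Dirac's lemma: every finite chordal graph is complete or has two non-adjacent
simplicial vertices. -/
theorem stmt3 [Fintype V] (G : SimpleGraph V) (hG : IsChordalGraph G) :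
    (∀ a b : V, a ≠ b → G.Adj a b) ∨
      ∃ u v : V, u ≠ v ∧ ¬ G.Adj u v ∧ IsSimplicialVertex G u ∧ IsSimplicialVertex G v :=
  hG.isCompleteOrHasNonadjSimplicialPair
end

section
/- Let (G, ψ) be a finite vertex-weighted graph over a poset P with at least one vertex. Suppose G is chordal, ψ(u) and ψ(v) are comparable for every edge {u,v}, and (G, ψ) contains no induced path v₁⋯v_k with k ≥ 3 and ψ(v₁) > ψ(v₂) = ⋯ = ψ(v_{k-1}) < ψ(v_k). Then there exists a simplicial vertex v of G such that ψ(v) ≤ ψ(u) for every neighbor u of v. -/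
variable {V P : Type*} [PartialOrder P]

/-- `v 0, v 1, …, v (k-1)` is a path in `G`: distinct vertices, consecutive ones adjacent. -/
def IsPathOn (G : SimpleGraph V) (k : ℕ) (v : ℕ → V) : Prop :=
  (∀ i j, i < k → j < k → v i = v j → i = j) ∧ ∀ i, i + 1 < k → G.Adj (v i) (v (i + 1))

/-- `v 0, …, v (k-1)` is an induced path in `G`. -/
def IsInducedPathOn (G : SimpleGraph V) (k : ℕ) (v : ℕ → V) : Prop :=
  IsPathOn G k v ∧ ∀ i j, i < k → j < k → G.Adj (v i) (v j) → i + 1 = j ∨ j + 1 = i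

/-!
Let `z₀` have minimal weight and let `C` be its component in the subgraph induced by the
vertices of weight `ψ z₀`. By comparability and minimality every vertex outside `C` adjacent to
`C` is strictly heavier, so two non-adjacent such vertices would be the ends of a shortest, hence
induced, path through `C`: a forbidden valley. Thus the boundary of `C` is a clique, and Dirac's
lemma in the form "a nonempty vertex set with clique boundary contains a simplicial vertex"
yields a simplicial vertex in `C`. Dirac's lemma goes by induction on the number of vertices:
either the set together with its boundary misses a vertex and one restricts to it, or one passes
to a side of a minimal separator. In a chordal graph minimal separators are cliques, since two
chordless paths through the two sides would close up to a chordless cycle.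
-/

namespace SimpleGraph.Walk

variable {G : SimpleGraph V} {u v w : V}

theorem isChordless_of_length_eq_dist (p : G.Walk u v) (hp : p.length = G.dist u v) :
    p.IsChordless := by
  rw [isChordless_iff_forall_mem_edges]
  intro a b ha hb hab
  obtain ⟨i, rfl, hi⟩ := mem_support_iff_exists_getVert.mp ha
  obtain ⟨j, rfl, hj⟩ := mem_support_iff_exists_getVert.mp hb
  wlog hij : i < j generalizing i j
  · have hne : i ≠ j := by rintro rfl; exact hab.ne rfl
    rw [Sym2.eq_swap]
    exact this j hj hb i hi ha hab.symm (by omega)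
  by_contra hnot
  have hgap : i + 1 < j := by
    by_contra h
    obtain rfl : j = i + 1 := by omega
    exact hnot ((mk_mem_edges_iff_exists p).mpr ⟨i, by omega, rfl⟩)
  have := G.dist_le ((p.take i).append (cons hab (p.drop j)))
  simp only [length_append, take_length, length_cons, drop_length] at this
  omega

theorem two_le_length_of_not_adj (huv : u ≠ v) (hnadj : ¬ G.Adj u v) (p : G.Walk u v) :
    2 ≤ p.length := by
  by_contra h
  interval_cases hp : p.length
  · exact huv (eq_of_length_eq_zero hp)
  · exact hnadj (adj_of_length_eq_one hp)

theorem exists_isPath_isChordless_of_support_subset {s : Set V} (p : G.Walk u v)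
    (hp : ∀ x ∈ p.support, x ∈ s) :
    ∃ q : G.Walk u v, q.IsPath ∧ q.IsChordless ∧ ∀ x ∈ q.support, x ∈ s := by
  obtain ⟨r, hr⟩ := (p.induce s hp).reachable.exists_walk_length_eq_dist
  have hc : (r.map (Embedding.induce s).toHom).IsChordless := by
    rw [isChordless_iff_forall_mem_edges, edges_map]
    simp only [support_map, List.mem_map]
    rintro _ _ ⟨a, ha, rfl⟩ ⟨b, hb, rfl⟩ hab
    exact ⟨s(a, b), (isChordless_of_length_eq_dist r hr).mem_edges ha hb hab, rfl⟩
  have hs : ∀ x ∈ (r.map (Embedding.induce s).toHom).support, x ∈ s := by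
    simp only [support_map, List.mem_map]
    rintro _ ⟨y, -, rfl⟩
    exact y.2
  exact ⟨_, (r.isPath_of_length_eq_dist hr).map Subtype.val_injective, hc, hs⟩

theorem IsPath.isInducedPathOn_getVert {p : G.Walk u v} (hp : p.IsPath) (hc : p.IsChordless) :
    IsInducedPathOn G (p.length + 1) p.getVert := by
  have inj : ∀ i j, i ≤ p.length → j ≤ p.length → p.getVert i = p.getVert j → i = j :=
    fun i j hi hj h => hp.getVert_injOn hi hj h
  refine ⟨⟨fun i j hi hj => inj i j (by omega) (by omega),
    fun i hi => p.adj_getVert_succ (by omega)⟩, fun i j hi hj hadj => ?_⟩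
  obtain ⟨t, ht, he⟩ := (mk_mem_edges_iff_exists p).mp
    (hc.mem_edges (p.getVert_mem_support i) (p.getVert_mem_support j) hadj)
  rcases Sym2.eq_iff.mp he with ⟨h1, h2⟩ | ⟨h1, h2⟩
  · have := inj _ _ (by omega) (by omega) h1
    have := inj _ _ (by omega) (by omega) h2
    omega
  · have := inj _ _ (by omega) (by omega) h1
    have := inj _ _ (by omega) (by omega) h2
    omega

theorem IsPath.getVert_mem_of_support {C : Set V} {p : G.Walk u w} (hp : p.IsPath)
    (hs : ∀ y ∈ p.support, y = u ∨ y = w ∨ y ∈ C) {i : ℕ} (hi0 : 0 < i) (hi : i < p.length) :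
    p.getVert i ∈ C := by
  rcases hs _ (p.getVert_mem_support i) with h | h | h
  · have := hp.getVert_injOn (by omega : i ≤ p.length) (Nat.zero_le _) (h.trans p.getVert_zero.symm)
    omega
  · have := hp.getVert_injOn (by omega : i ≤ p.length) (le_refl p.length) (h.trans p.getVert_length.symm)
    omega
  · exact h

end SimpleGraph.Walk

namespace IsChordalGraph

open SimpleGraph Walk

variable {G : SimpleGraph V}

theorem induce (hG : IsChordalGraph G) (s : Set V) : IsChordalGraph (G.induce s) := by
  intro u c hc hlen
  let f := (Embedding.induce s (G := G)).toHom
  obtain ⟨a, b, ha, hb, hab, hnab⟩ := hG (f u) (c.map f) (hc.map Subtype.val_injective)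
    (by rwa [length_map])
  rw [Walk.support_map, List.mem_map] at ha hb
  obtain ⟨a, ha, rfl⟩ := ha
  obtain ⟨b, hb, rfl⟩ := hb
  refine ⟨a, b, ha, hb, hab, fun hmem => hnab ?_⟩
  rw [edges_map]
  exact List.mem_map.mpr ⟨s(a, b), hmem, rfl⟩

/-- If `x` and `y` were not adjacent, `p` followed by `q.reverse` would be a cycle of length at
least four, and `hsep` together with chordlessness of `p` and `q` rules out all of its chords. -/
theorem adj_of_isChordless (hG : IsChordalGraph G) {x y : V} (hxy : x ≠ y) {p q : G.Walk x y}
    (hp : p.IsPath) (hq : q.IsPath) (hpc : p.IsChordless) (hqc : q.IsChordless)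
    (hsep : ∀ a ∈ p.support, ∀ b ∈ q.support, (a = b ∨ G.Adj a b) →
      a = x ∨ a = y ∨ b = x ∨ b = y) :
    G.Adj x y := by
  by_contra hnadj
  have hlen := two_le_length_of_not_adj hxy hnadj
  have hstart : ∀ {u v : V} {r : G.Walk u v}, r.IsPath → ∀ a ∈ r.support.tail, a ≠ u := by
    intro u v r hr a ha hau
    have := r.cons_tail_support ▸ hr.support_nodup
    exact (List.nodup_cons.mp this).1 (hau ▸ ha)
  have hdisj : p.support.tail.Disjoint q.reverse.support.tail := by
    intro a hap haq
    have hax := hstart hp a hap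
    have hay := hstart hq.reverse a haq
    rw [support_reverse] at haq
    have haq' := List.mem_reverse.mp (List.mem_of_mem_tail haq)
    rcases hsep a (List.mem_of_mem_tail hap) a haq' (Or.inl rfl) with h | h | h | h <;>
      contradiction
  have hcyc : (p.append q.reverse).IsCycle :=
    hp.isCycle_append hq.reverse hdisj (Or.inl (hlen p))
  obtain ⟨a, b, ha, hb, hab, hchord⟩ :=
    hG x _ hcyc (by rw [length_append, length_reverse]; linarith [hlen p, hlen q])
  have hmem : ∀ w ∈ (p.append q.reverse).support, w ∈ p.support ∨ w ∈ q.support := by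
    intro w hw
    rw [mem_support_append_iff, support_reverse, List.mem_reverse] at hw
    exact hw
  have hcross : ∀ a ∈ p.support, ∀ b ∈ q.support, G.Adj a b →
      a ∈ q.support ∨ b ∈ p.support := by
    intro a ha b hb hab
    rcases hsep a ha b hb (Or.inr hab) with rfl | rfl | rfl | rfl
    exacts [Or.inl q.start_mem_support, Or.inl q.end_mem_support,
      Or.inr p.start_mem_support, Or.inr p.end_mem_support]
  apply hchord
  rw [edges_append, edges_reverse, List.mem_append, List.mem_reverse]
  have inP : a ∈ p.support → b ∈ p.support → s(a, b) ∈ p.edges ∨ s(a, b) ∈ q.edges :=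
    fun ha hb => Or.inl (hpc.mem_edges ha hb hab)
  have inQ : a ∈ q.support → b ∈ q.support → s(a, b) ∈ p.edges ∨ s(a, b) ∈ q.edges :=
    fun ha hb => Or.inr (hqc.mem_edges ha hb hab)
  rcases hmem a ha with ha | ha <;> rcases hmem b hb with hb | hb
  · exact inP ha hb
  · rcases hcross a ha b hb hab with h | h
    exacts [inQ h hb, inP ha h]
  · rcases hcross b hb a ha hab.symm with h | h
    exacts [inQ ha h, inP h hb]
  · exact inQ ha hb

end IsChordalGraph

namespace SimpleGraph

open Walk

variable {G : SimpleGraph V} {T S : Set V} {a b u v w x : V}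

/-- The vertex set of the component of `a` in `G[T]`; empty when `a ∉ T`. -/
def componentIn (G : SimpleGraph V) (T : Set V) (a : V) : Set V :=
  {v | ∃ p : G.Walk a v, ∀ y ∈ p.support, y ∈ T}

def vertexBoundary (G : SimpleGraph V) (X : Set V) : Set V :=
  {v | v ∉ X ∧ ∃ x ∈ X, G.Adj x v}

def Separates (G : SimpleGraph V) (S : Set V) (a b : V) : Prop :=
  a ∉ S ∧ b ∉ S ∧ b ∉ G.componentIn Sᶜ a

theorem componentIn_subset : G.componentIn T a ⊆ T :=
  fun _ ⟨p, hp⟩ => hp _ p.end_mem_support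

theorem mem_componentIn_self (ha : a ∈ T) : a ∈ G.componentIn T a :=
  ⟨nil, by simpa using ha⟩

theorem mem_componentIn_of_adj (hv : v ∈ G.componentIn T a) (hvw : G.Adj v w) (hw : w ∈ T) :
    w ∈ G.componentIn T a := by
  obtain ⟨p, hp⟩ := hv
  refine ⟨p.concat hvw, fun y hy => ?_⟩
  rw [support_concat, List.mem_append, List.mem_singleton] at hy
  rcases hy with hy | rfl
  exacts [hp y hy, hw]

theorem mem_componentIn_comm : b ∈ G.componentIn T a ↔ a ∈ G.componentIn T b :=
  ⟨fun ⟨p, hp⟩ => ⟨p.reverse, by simpa using hp⟩, fun ⟨p, hp⟩ => ⟨p.reverse, by simpa using hp⟩⟩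

theorem mem_componentIn_of_mem_of_mem (hwa : w ∈ G.componentIn T a)
    (hwb : w ∈ G.componentIn T b) : b ∈ G.componentIn T a := by
  obtain ⟨p, hp⟩ := hwa
  obtain ⟨q, hq⟩ := mem_componentIn_comm.mp hwb
  refine ⟨p.append q, fun y hy => ?_⟩
  rcases (mem_support_append_iff p q).mp hy with hy | hy
  exacts [hp y hy, hq y hy]

theorem support_subset_componentIn (p : G.Walk a v) (hp : ∀ y ∈ p.support, y ∈ T) :
    ∀ y ∈ p.support, y ∈ G.componentIn T a := by
  classical
  exact fun y hy => ⟨p.takeUntil y hy, fun z hz => hp z (p.support_takeUntil_subset_support hy hz)⟩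

theorem exists_walk_of_mem_componentIn (hu : u ∈ G.componentIn T a)
    (hv : v ∈ G.componentIn T a) : ∃ p : G.Walk u v, ∀ y ∈ p.support, y ∈ G.componentIn T a := by
  obtain ⟨p, hp⟩ := hu
  obtain ⟨q, hq⟩ := hv
  refine ⟨p.reverse.append q, fun y hy => ?_⟩
  rcases (mem_support_append_iff _ q).mp hy with hy | hy
  · exact support_subset_componentIn p hp y (by simpa using hy)
  · exact support_subset_componentIn q hq y hy

theorem vertexBoundary_componentIn_subset : G.vertexBoundary (G.componentIn T a) ⊆ Tᶜ :=
  fun _ ⟨hv, _, hx, hxv⟩ hvT => hv (mem_componentIn_of_adj hx hxv hvT)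

theorem exists_isChordless_through_componentIn {xu xw : V} (hxu : xu ∈ G.componentIn T a)
    (hxw : xw ∈ G.componentIn T a) (hu : G.Adj u xu) (hw : G.Adj xw w) :
    ∃ p : G.Walk u w, p.IsPath ∧ p.IsChordless ∧
      ∀ y ∈ p.support, y = u ∨ y = w ∨ y ∈ G.componentIn T a := by
  obtain ⟨r, hr⟩ := exists_walk_of_mem_componentIn hxu hxw
  refine (cons hu (r.concat hw)).exists_isPath_isChordless_of_support_subset fun y hy => ?_
  rw [support_cons, support_concat, List.mem_cons, List.mem_append, List.mem_singleton] at hy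
  rcases hy with rfl | hy | rfl
  exacts [Or.inl rfl, Or.inr (Or.inr (hr y hy)), Or.inr (Or.inl rfl)]

theorem mem_componentIn_or_exists_adj (p : G.Walk u v) (hu : u ∈ G.componentIn T a)
    (hp : ∀ y ∈ p.support, y ∈ insert x T) :
    v ∈ G.componentIn T a ∨ ∃ y ∈ G.componentIn T a, G.Adj y x := by
  induction p with
  | nil => exact Or.inl hu
  | @cons u c v h p ih =>
    by_cases hc : c = x
    · exact Or.inr ⟨u, hu, hc ▸ h⟩
    have hcT : c ∈ T := (hp c (by simp)).resolve_left hc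
    exact ih (mem_componentIn_of_adj hu h hcT) fun y hy => hp y (by simp [hy])

theorem separates_comm : G.Separates S a b ↔ G.Separates S b a := by
  simp only [Separates, mem_componentIn_comm (a := a)]
  tauto

theorem separates_compl_pair (hab : a ≠ b) (hnadj : ¬ G.Adj a b) :
    G.Separates ({a, b}ᶜ) a b := by
  refine ⟨by simp, by simp, ?_⟩
  rintro ⟨p, hp⟩
  cases p with
  | nil => exact hab rfl
  | cons h p =>
    simp only [compl_compl, support_cons, List.mem_cons, Set.mem_insert_iff,
      Set.mem_singleton_iff] at hp
    rcases hp _ (Or.inr p.start_mem_support) with hc | rfl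
    exacts [h.ne hc.symm, hnadj h]

namespace Separates

theorem ne_and_not_adj (h : G.Separates S a b) (hu : u ∈ G.componentIn Sᶜ a)
    (hw : w ∈ G.componentIn Sᶜ b) : u ≠ w ∧ ¬ G.Adj u w := by
  refine ⟨fun huw => h.2.2 (mem_componentIn_of_mem_of_mem hu (huw ▸ hw)), fun huw => ?_⟩
  exact h.2.2 (mem_componentIn_of_mem_of_mem (mem_componentIn_of_adj hu huw
    (componentIn_subset hw)) hw)

theorem exists_adj_of_minimal (h : Minimal (G.Separates · a b) S) (hx : x ∈ S) :
    ∃ y ∈ G.componentIn Sᶜ a, G.Adj y x := by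
  have hsub : ¬ G.Separates (S \ {x}) a b :=
    h.not_prop_of_lt (Set.sdiff_singleton_ssubset.mpr hx)
  obtain ⟨ha, hb, hsep⟩ := h.prop
  have hab : b ∈ G.componentIn (S \ {x})ᶜ a := by
    by_contra hab
    exact hsub ⟨fun h' => ha h'.1, fun h' => hb h'.1, hab⟩
  obtain ⟨p, hp⟩ := hab
  refine (mem_componentIn_or_exists_adj p (mem_componentIn_self ha) fun y hy => ?_).resolve_left
    hsep
  have := hp y hy
  simp only [Set.mem_compl_iff, Set.mem_sdiff, Set.mem_singleton_iff, not_and, not_not] at this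
  by_cases hyS : y ∈ S
  exacts [Or.inl (this hyS), Or.inr hyS]

end Separates

end SimpleGraph

namespace IsChordalGraph

open SimpleGraph

variable {G : SimpleGraph V} {S : Set V} {a b : V}

theorem isClique_of_minimal_separates (hG : IsChordalGraph G)
    (hS : Minimal (G.Separates · a b) S) : G.IsClique S := by
  intro x hx y hy hxy
  have hS' : Minimal (G.Separates · b a) S := by simpa only [separates_comm] using hS
  obtain ⟨xa, hxa, hxxa⟩ := Separates.exists_adj_of_minimal hS hx
  obtain ⟨ya, hya, hyya⟩ := Separates.exists_adj_of_minimal hS hy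
  obtain ⟨xb, hxb, hxxb⟩ := Separates.exists_adj_of_minimal hS' hx
  obtain ⟨yb, hyb, hyyb⟩ := Separates.exists_adj_of_minimal hS' hy
  obtain ⟨p, hp, hpc, hps⟩ := exists_isChordless_through_componentIn hxa hya hxxa.symm hyya
  obtain ⟨q, hq, hqc, hqs⟩ := exists_isChordless_through_componentIn hxb hyb hxxb.symm hyyb
  refine hG.adj_of_isChordless hxy hp hq hpc hqc fun u hu w hw huw => ?_
  rcases hps u hu with rfl | rfl | hu
  · exact Or.inl rfl
  · exact Or.inr (Or.inl rfl)
  rcases hqs w hw with rfl | rfl | hw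
  · exact Or.inr (Or.inr (Or.inl rfl))
  · exact Or.inr (Or.inr (Or.inr rfl))
  have := Separates.ne_and_not_adj hS.prop hu hw
  tauto

end IsChordalGraph

namespace SimpleGraph

variable {G : SimpleGraph V} {s Y : Set V} {y w : V}

theorem mem_union_vertexBoundary_of_adj (hy : y ∈ Y) (hyw : G.Adj y w) :
    w ∈ Y ∪ G.vertexBoundary Y :=
  or_iff_not_imp_left.mpr fun hw => ⟨hw, y, hy, hyw⟩

theorem image_vertexBoundary_induce_subset :
    Subtype.val '' (G.induce s).vertexBoundary (Subtype.val ⁻¹' Y) ⊆ G.vertexBoundary Y := by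
  rintro _ ⟨u, ⟨hu, x, hx, hxu⟩, rfl⟩
  exact ⟨hu, x, hx, hxu⟩

end SimpleGraph

open SimpleGraph

theorem isSimplicialVertex_of_isClique {G : SimpleGraph V} {s : Set V} {z : V}
    (hs : G.IsClique s) (hz : ∀ w, G.Adj z w → w ∈ s) : IsSimplicialVertex G z :=
  fun _ _ ha hb hab => hs (hz _ ha) (hz _ hb) hab

theorem IsSimplicialVertex.of_induce_s6 {G : SimpleGraph V} {s : Set V} {z : s}
    (h : IsSimplicialVertex (G.induce s) z) (hz : ∀ w, G.Adj z w → w ∈ s) :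
    IsSimplicialVertex G z :=
  fun a b ha hb hab => h ⟨a, hz a ha⟩ ⟨b, hz b hb⟩ ha hb fun e => hab (congrArg Subtype.val e)

namespace IsChordalGraph

variable {G : SimpleGraph V} {S X : Set V} {a b : V}

theorem isClique_vertexBoundary_componentIn (hG : IsChordalGraph G)
    (hS : Minimal (G.Separates · a b) S) :
    G.IsClique (G.vertexBoundary (G.componentIn Sᶜ a)) :=
  (hG.isClique_of_minimal_separates hS).subset fun _ hv =>
    compl_compl S ▸ vertexBoundary_componentIn_subset hv

/-- The side of a minimal separator that avoids the clique `∂X` lies in `X`, and its closure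
misses the vertex on the other side. -/
theorem exists_subset_of_not_adj [Finite V] (hG : IsChordalGraph G)
    (hB : G.IsClique (G.vertexBoundary X)) (hcover : ∀ v, v ∉ X → v ∈ G.vertexBoundary X)
    (hab : a ≠ b) (hnadj : ¬ G.Adj a b) :
    ∃ Y ⊆ X, Y.Nonempty ∧ G.IsClique (G.vertexBoundary Y) ∧
      ∃ v, v ∉ Y ∧ v ∉ G.vertexBoundary Y := by
  obtain ⟨S, -, hS⟩ := exists_minimal_le_of_wellFoundedLT (G.Separates · a b) _
    (separates_compl_pair hab hnadj)
  have side : ∀ {a b : V}, Minimal (G.Separates · a b) S →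
      (∀ v ∈ G.componentIn Sᶜ a, v ∉ G.vertexBoundary X) →
      ∃ Y ⊆ X, Y.Nonempty ∧ G.IsClique (G.vertexBoundary Y) ∧
        ∃ v, v ∉ Y ∧ v ∉ G.vertexBoundary Y := by
    intro a b hS havoid
    obtain ⟨haS, hbS, hsep⟩ := hS.prop
    exact ⟨_, fun v hv => not_not.mp fun hvX => havoid v hv (hcover v hvX),
      ⟨a, mem_componentIn_self haS⟩, hG.isClique_vertexBoundary_componentIn hS,
      b, hsep, fun h => hbS (compl_compl S ▸ vertexBoundary_componentIn_subset h)⟩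
  by_cases! havoid : ∀ v ∈ G.componentIn Sᶜ a, v ∉ G.vertexBoundary X
  · exact side hS havoid
  obtain ⟨u, hu, huB⟩ := havoid
  refine side (a := b) (b := a) (by simpa only [separates_comm] using hS) fun w hw hwB => ?_
  have := Separates.ne_and_not_adj hS.prop hu hw
  exact this.2 (hB huB hwB this.1)

/-- A form of Dirac's lemma on simplicial vertices of chordal graphs. -/
theorem exists_isSimplicialVertex_mem [Finite V] (hG : IsChordalGraph G) (hX : X.Nonempty)
    (hB : G.IsClique (G.vertexBoundary X)) : ∃ z ∈ X, IsSimplicialVertex G z := by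
  induction hn : Nat.card V using Nat.strong_induction_on generalizing V with
  | _ n ih =>
  have reduce : ∀ {Y : Set V}, Y.Nonempty → G.IsClique (G.vertexBoundary Y) →
      (∃ v, v ∉ Y ∧ v ∉ G.vertexBoundary Y) → ∃ z ∈ Y, IsSimplicialVertex G z := by
    rintro Y ⟨y, hy⟩ hYB ⟨v, hvY, hvB⟩
    let s := Y ∪ G.vertexBoundary Y
    have hcard : Nat.card s < n :=
      hn ▸ Finite.card_subtype_lt (p := (· ∈ s)) (x := v) (by simp [s, hvY, hvB])
    obtain ⟨z, hz, hzs⟩ := ih _ hcard (hG.induce s) (X := Subtype.val ⁻¹' Y)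
      ⟨⟨y, .inl hy⟩, hy⟩ (isClique_induce_iff.mpr (hYB.subset image_vertexBoundary_induce_subset))
      rfl
    exact ⟨z, hz, hzs.of_induce_s6 fun _ => mem_union_vertexBoundary_of_adj hz⟩
  by_cases hcl : G.IsClique (X ∪ G.vertexBoundary X)
  · obtain ⟨x, hx⟩ := hX
    exact ⟨x, hx, isSimplicialVertex_of_isClique hcl fun _ => mem_union_vertexBoundary_of_adj hx⟩
  by_cases! hmiss : ∃ v, v ∉ X ∧ v ∉ G.vertexBoundary X
  · exact reduce hX hB hmiss
  obtain ⟨a, -, b, -, hab, hnadj⟩ : ∃ a ∈ X ∪ G.vertexBoundary X, ∃ b ∈ X ∪ G.vertexBoundary X,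
      a ≠ b ∧ ¬ G.Adj a b := by
    simpa [SimpleGraph.IsClique, Set.Pairwise] using hcl
  obtain ⟨Y, hYX, hY, hYB, hYmiss⟩ := hG.exists_subset_of_not_adj hB hmiss hab hnadj
  obtain ⟨z, hz, hzs⟩ := reduce hY hYB hYmiss
  exact ⟨z, hYX hz, hzs⟩

end IsChordalGraph

theorem exists_valley_of_isChordless {G : SimpleGraph V} {ψ : V → P} {m : P} {u w : V}
    {p : G.Walk u w} (hp : p.IsPath) (hpc : p.IsChordless) (hlen : 2 ≤ p.length)
    (hu : m < ψ u) (hw : m < ψ w) (hint : ∀ i, 0 < i → i < p.length → ψ (p.getVert i) = m) :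
    ∃ (k : ℕ) (v : ℕ → V), 3 ≤ k ∧ IsInducedPathOn G k v ∧
      ψ (v 1) < ψ (v 0) ∧ (∀ j, 0 < j → j < k - 1 → ψ (v j) = ψ (v 1)) ∧
      ψ (v 1) < ψ (v (k - 1)) := by
  have h1 := hint 1 one_pos (by omega)
  refine ⟨p.length + 1, p.getVert, by omega, hp.isInducedPathOn_getVert hpc, ?_,
    fun j hj0 hj => by rw [h1, hint j hj0 (by omega)], ?_⟩
  · rwa [h1, Walk.getVert_zero]
  · rwa [h1, Nat.add_sub_cancel, Walk.getVert_length]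

theorem stmt6 [Fintype V] [Nonempty V] (G : SimpleGraph V) (ψ : V → P)
    (hchordal : IsChordalGraph G)
    (hcomp : ∀ u v : V, G.Adj u v → ψ u ≤ ψ v ∨ ψ v ≤ ψ u)
    (hnopath : ¬ ∃ (k : ℕ) (v : ℕ → V), 3 ≤ k ∧ IsInducedPathOn G k v ∧
      ψ (v 1) < ψ (v 0) ∧ (∀ j, 0 < j → j < k - 1 → ψ (v j) = ψ (v 1)) ∧
      ψ (v 1) < ψ (v (k - 1))) :
    ∃ v : V, IsSimplicialVertex G v ∧ ∀ u : V, G.Adj v u → ψ v ≤ ψ u := by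
  obtain ⟨_, ⟨z₀, rfl⟩, hmin⟩ := (Set.finite_range ψ).exists_minimal (Set.range_nonempty ψ)
  let C := G.componentIn {v | ψ v = ψ z₀} z₀
  have hC : ∀ {v}, v ∈ C → ψ v = ψ z₀ := fun hv => componentIn_subset (T := {v | ψ v = ψ z₀}) hv
  have hge : ∀ v w, G.Adj v w → ψ v = ψ z₀ → ψ z₀ ≤ ψ w := fun v w hvw hv =>
    (hcomp v w hvw).elim (hv ▸ ·) fun h => hmin ⟨w, rfl⟩ (hv ▸ h)
  have hout : ∀ v ∈ G.vertexBoundary C, ψ z₀ < ψ v := fun v hv =>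
    let ⟨_, _, hx, hxv⟩ := hv
    (hge _ v hxv (hC hx)).lt_of_ne fun h => vertexBoundary_componentIn_subset hv h.symm
  have hB : G.IsClique (G.vertexBoundary C) := by
    intro u hu w hw huw
    by_contra hnadj
    obtain ⟨xu, hxu, hxuu⟩ := hu.2
    obtain ⟨xw, hxw, hxww⟩ := hw.2
    obtain ⟨p, hp, hpc, hps⟩ := exists_isChordless_through_componentIn hxu hxw hxuu.symm hxww
    exact hnopath <| exists_valley_of_isChordless hp hpc (p.two_le_length_of_not_adj huw hnadj)
      (hout u hu) (hout w hw) fun i hi0 hi => hC (hp.getVert_mem_of_support hps hi0 hi)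
  obtain ⟨z, hz, hzs⟩ :=
    hchordal.exists_isSimplicialVertex_mem (X := C) ⟨z₀, mem_componentIn_self rfl⟩ hB
  exact ⟨z, hzs, fun u hu => (hC hz).symm ▸ hge z u hu (hC hz)⟩
end

section
/- Let (G, ψ) be a finite vertex-weighted graph over a poset, with G chordal and ψ(u), ψ(v) comparable for every edge {u,v}, and with no induced path v₁⋯v_k (k ≥ 3) satisfying ψ(v₁) > ψ(v₂) = ⋯ = ψ(v_{k-1}) < ψ(v_k). Let S be a connected component of the subgraph induced by the vertices whose ψ-value is minimal in ψ(V_G), and let N be the set of vertices outside S adjacent to some vertex of S. Then N is a clique of G. -/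
variable {V P : Type*} [PartialOrder P]

/-- The set of vertices whose weight is minimal in `ψ(V)`. -/
def MinimalWeightVerts (ψ : V → P) : Set V := {v | ¬ ∃ w, ψ w < ψ v}

private lemma splice_lemma {V : Type*} (G : SimpleGraph V) (T : Set V) (u w : V)
    (k : ℕ) (v : ℕ → V)
    (h0 : v 0 = u) (hl : v (k-1) = w)
    (hadj : ∀ n, n+1 < k → G.Adj (v n) (v (n+1)))
    (hS : ∀ n, 0 < n → n < k-1 → v n ∈ T)
    (i g : ℕ) (hg : 1 ≤ g) (hgk : g + 2 ≤ k) (hig : i + g ≤ k - 1)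
    (hseam : i + 1 + g < k → G.Adj (v i) (v (i + 1 + g)))
    (hend : i + g = k - 1 → v i = w) :
    ∃ (k' : ℕ) (v' : ℕ → V), k' < k ∧ 2 ≤ k' ∧ v' 0 = u ∧ v' (k'-1) = w ∧
      (∀ n, n+1 < k' → G.Adj (v' n) (v' (n+1))) ∧
      (∀ n, 0 < n → n < k'-1 → v' n ∈ T) := by
  refine ⟨k - g, fun n => if n ≤ i then v n else v (n + g), by omega, by omega, ?_, ?_, ?_, ?_⟩
  · simpa using h0
  · by_cases h : k - g - 1 ≤ i
    · have hi : k - g - 1 = i := by omega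
      simp only [hi, le_refl, if_pos]
      exact hend (by omega)
    · simp only [if_neg h]
      have : k - g - 1 + g = k - 1 := by omega
      rw [this]; exact hl
  · intro n hn
    by_cases h2 : n ≤ i
    · by_cases h1 : n + 1 ≤ i
      · simp only [if_pos h1, if_pos h2]
        exact hadj n (by omega)
      · have hni : n = i := by omega
        subst hni
        beta_reduce
        rw [if_pos h2, if_neg h1]
        exact hseam (by omega)
    · have h1 : ¬ (n + 1 ≤ i) := by omega
      simp only [if_neg h1, if_neg h2]
      have : n + 1 + g = n + g + 1 := by omega
      rw [this]
      exact hadj (n + g) (by omega)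
  · intro n h0n hn
    by_cases h2 : n ≤ i
    · simp only [if_pos h2]
      exact hS n h0n (by omega)
    · simp only [if_neg h2]
      exact hS (n + g) (by omega) (by omega)

private lemma reach_psi_eq {V P : Type*} [PartialOrder P] (G : SimpleGraph V) (ψ : V → P)
    (hcomp : ∀ u v : V, G.Adj u v → ψ u ≤ ψ v ∨ ψ v ≤ ψ u)
    {a b : MinimalWeightVerts ψ}
    (h : (G.induce (MinimalWeightVerts ψ)).Reachable a b) :
    ψ a.val = ψ b.val := by
  obtain ⟨p⟩ := h
  induction p with
  | nil => rfl
  | @cons x y z hxy p ih =>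
    have hadj : G.Adj x.val y.val := hxy
    have hx : ¬ ∃ w, ψ w < ψ x.val := x.2
    have hy : ¬ ∃ w, ψ w < ψ y.val := y.2
    have hxyeq : ψ x.val = ψ y.val := by
      rcases hcomp _ _ hadj with h1 | h1
      · rcases lt_or_eq_of_le h1 with h2 | h2
        · exact absurd ⟨x.val, h2⟩ hy
        · exact h2
      · rcases lt_or_eq_of_le h1 with h2 | h2
        · exact absurd ⟨y.val, h2⟩ hx
        · exact h2.symm
    rw [hxyeq]; exact ih

theorem stmt7 [Fintype V] (G : SimpleGraph V) (ψ : V → P)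
    (hchordal : IsChordalGraph G)
    (hcomp : ∀ u v : V, G.Adj u v → ψ u ≤ ψ v ∨ ψ v ≤ ψ u)
    (hnopath : ¬ ∃ (k : ℕ) (v : ℕ → V), 3 ≤ k ∧ IsInducedPathOn G k v ∧
      ψ (v 1) < ψ (v 0) ∧ (∀ j, 0 < j → j < k - 1 → ψ (v j) = ψ (v 1)) ∧
      ψ (v 1) < ψ (v (k - 1)))
    (C : (G.induce (MinimalWeightVerts ψ)).ConnectedComponent) :
    letI S : Set V :=
      {v | ∃ h : v ∈ MinimalWeightVerts ψ,
        (G.induce (MinimalWeightVerts ψ)).connectedComponentMk ⟨v, h⟩ = C}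
    letI N : Set V := {v | v ∉ S ∧ ∃ u ∈ S, G.Adj v u}
    ∀ u ∈ N, ∀ w ∈ N, u ≠ w → G.Adj u w := by
  classical
  intro u hu w hw huw
  set S : Set V := {v | ∃ h : v ∈ MinimalWeightVerts ψ,
      (G.induce (MinimalWeightVerts ψ)).connectedComponentMk ⟨v, h⟩ = C} with hSdef
  obtain ⟨huS, su, hsuS, hu_adj⟩ := hu
  obtain ⟨hwS, sw, hswS, hw_adj⟩ := hw
  by_contra hadj
  -- All vertices of S have equal weight
  have hSeq : ∀ x ∈ S, ∀ y ∈ S, ψ x = ψ y := by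
    rintro x ⟨hx, hxC⟩ y ⟨hy, hyC⟩
    have : (G.induce (MinimalWeightVerts ψ)).Reachable ⟨x, hx⟩ ⟨y, hy⟩ :=
      SimpleGraph.ConnectedComponent.exact (hxC.trans hyC.symm)
    exact reach_psi_eq G ψ hcomp this
  -- any vertex outside S adjacent to a vertex of S has strictly larger weight
  have hkey : ∀ x, x ∉ S → ∀ s, s ∈ S → G.Adj x s → ψ s < ψ x := by
    rintro x hxS s ⟨hsM, hsC⟩ hxs
    have hxM : x ∉ MinimalWeightVerts ψ := by
      intro hxM
      apply hxS
      refine ⟨hxM, ?_⟩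
      have : (G.induce (MinimalWeightVerts ψ)).Adj ⟨x, hxM⟩ ⟨s, hsM⟩ := hxs
      rw [SimpleGraph.ConnectedComponent.connectedComponentMk_eq_of_adj this]
      exact hsC
    have hxnm : ∃ t, ψ t < ψ x := not_not.mp hxM
    have hsm : ¬ ∃ t, ψ t < ψ s := hsM
    rcases hcomp _ _ hxs with h1 | h1
    · rcases lt_or_eq_of_le h1 with h2 | h2
      · exact absurd ⟨x, h2⟩ hsm
      · exact absurd (h2 ▸ hxnm) hsM
    · rcases lt_or_eq_of_le h1 with h2 | h2
      · exact h2
      · exact absurd (h2 ▸ hxnm) hsM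
  -- Good sequences
  let Good : ℕ → Prop := fun k => ∃ v : ℕ → V, v 0 = u ∧ v (k-1) = w ∧
    (∀ n, n+1 < k → G.Adj (v n) (v (n+1))) ∧ (∀ n, 0 < n → n < k-1 → v n ∈ S)
  -- initial sequence from a walk in the induced graph
  have hGood : ∃ k, 2 ≤ k ∧ Good k := by
    obtain ⟨hsuM, hsuC⟩ := hsuS
    obtain ⟨hswM, hswC⟩ := hswS
    have hreach : (G.induce (MinimalWeightVerts ψ)).Reachable ⟨su, hsuM⟩ ⟨sw, hswM⟩ :=
      SimpleGraph.ConnectedComponent.exact (hsuC.trans hswC.symm)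
    obtain ⟨W⟩ := hreach
    -- every vertex visited by W is in S
    have hWS : ∀ n, (W.getVert n).val ∈ S := by
      intro n
      have hre : (G.induce (MinimalWeightVerts ψ)).Reachable ⟨su, hsuM⟩ (W.getVert n) := by
        induction n with
        | zero =>
          rw [W.getVert_zero]
        | succ m ih =>
          by_cases hm : m < W.length
          · exact ih.trans (W.adj_getVert_succ hm).reachable
          · have h1 : W.getVert (m+1) = ⟨sw, hswM⟩ := W.getVert_of_length_le (by omega)
            have h2 : W.getVert m = ⟨sw, hswM⟩ := W.getVert_of_length_le (by omega)
            rw [h1, ← h2]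
            exact ih
      refine ⟨(W.getVert n).2, ?_⟩
      rw [Subtype.eta]
      rw [← SimpleGraph.ConnectedComponent.sound hre]
      exact hsuC
    refine ⟨W.length + 3, by omega,
      fun n => if n = 0 then u else if n < W.length + 2 then (W.getVert (n-1)).val else w,
      by simp, ?_, ?_, ?_⟩
    · beta_reduce
      have h1 : W.length + 3 - 1 = W.length + 2 := by omega
      rw [h1, if_neg (by omega), if_neg (by omega)]
    · intro n hn
      beta_reduce
      rcases Nat.eq_zero_or_pos n with h0 | h0
      · subst h0
        rw [if_pos rfl, if_neg (by omega), if_pos (by omega)]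
        simpa [W.getVert_zero] using hu_adj
      · rw [if_neg (by omega)]
        by_cases h2 : n + 1 < W.length + 2
        · rw [if_pos (by omega), if_neg (by omega), if_pos h2]
          have := W.adj_getVert_succ (i := n - 1) (by omega)
          have hidx : n - 1 + 1 = n := by omega
          rw [hidx] at this
          exact this
        · have hn1 : n + 1 = W.length + 2 := by omega
          rw [if_pos (by omega), if_neg (by omega), if_neg (by omega)]
          have hnl : n - 1 = W.length := by omega
          rw [hnl, W.getVert_length]
          exact hw_adj.symm
    · intro n h0n hn
      beta_reduce
      rw [if_neg (by omega), if_pos (by omega)]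
      exact hWS (n - 1)
  obtain ⟨k0, hk02, hk0⟩ := hGood
  -- minimal k
  have hex : ∃ k, 2 ≤ k ∧ Good k := ⟨k0, hk02, hk0⟩
  let k := Nat.find hex
  obtain ⟨hk2, v, hv0, hvl, hvadj, hvS⟩ : 2 ≤ k ∧ Good k := Nat.find_spec hex
  have hmin : ∀ k', k' < k → ¬(2 ≤ k' ∧ Good k') := fun k' h => Nat.find_min hex h
  -- k ≥ 3
  have hk3 : 3 ≤ k := by
    rcases Nat.lt_or_ge k 3 with h | h
    · interval_cases k
      · have := hvadj 0 (by omega)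
        rw [hv0] at this
        have h1 : (2:ℕ) - 1 = 1 := rfl
        rw [h1] at hvl
        rw [hvl] at this
        exact absurd this hadj
    · exact h
  -- distinctness
  have hdist : ∀ i j, i < k → j < k → v i = v j → i = j := by
    have key : ∀ i j, i < j → j < k → v i ≠ v j := by
      intro i j hij hjk heq
      by_cases hend : i = 0 ∧ j = k - 1
      · apply huw
        rw [← hv0, ← hvl, ← hend.1, ← hend.2, heq]
      · have hgk : j - i + 2 ≤ k := by
          rcases Nat.eq_zero_or_pos i with h0 | h0
          · subst h0
            have : j ≠ k - 1 := fun h => hend ⟨rfl, h⟩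
            omega
          · omega
        obtain ⟨k', v', hk', h2k', h0', hl', hadj', hS'⟩ :=
          splice_lemma G S u w k v hv0 hvl hvadj hvS i (j - i) (by omega) hgk (by omega)
            (fun h => by
              have hij' : i + 1 + (j - i) = j + 1 := by omega
              rw [hij', heq]
              exact hvadj j (by omega))
            (fun h => by
              have : j = k - 1 := by omega
              rw [heq, this]
              exact hvl)
        exact hmin k' hk' ⟨h2k', v', h0', hl', hadj', hS'⟩
    intro i j hik hjk heq
    rcases lt_trichotomy i j with h | h | h
    · exact absurd heq (key i j h hjk)
    · exact h
    · exact absurd heq.symm (key j i h hik)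
  -- inducedness
  have hind : ∀ i j, i < k → j < k → G.Adj (v i) (v j) → i + 1 = j ∨ j + 1 = i := by
    have key : ∀ i j, i < j → j < k → G.Adj (v i) (v j) → i + 1 = j := by
      intro i j hij hjk hvij
      by_contra hne
      have hij2 : i + 1 < j := by omega
      obtain ⟨k', v', hk', h2k', h0', hl', hadj', hS'⟩ :=
        splice_lemma G S u w k v hv0 hvl hvadj hvS i (j - i - 1) (by omega) (by omega) (by omega)
          (fun h => by
            have hij' : i + 1 + (j - i - 1) = j := by omega
            rw [hij']
            exact hvij)
          (fun h => by omega)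
      exact hmin k' hk' ⟨h2k', v', h0', hl', hadj', hS'⟩
    intro i j hik hjk hvij
    rcases lt_trichotomy i j with h | h | h
    · exact Or.inl (key i j h hjk hvij)
    · exact absurd (h ▸ hvij) (G.irrefl)
    · exact Or.inr (key j i h hik hvij.symm)
  -- contradiction with hnopath
  apply hnopath
  refine ⟨k, v, hk3, ⟨⟨hdist, hvadj⟩, hind⟩, ?_, ?_, ?_⟩
  · have h1S : v 1 ∈ S := hvS 1 (by omega) (by omega)
    have := hkey u huS (v 1) h1S (by rw [← hv0]; exact hvadj 0 (by omega))
    rw [hv0]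
    exact this
  · intro j h0j hjk
    exact hSeq (v j) (hvS j h0j hjk) (v 1) (hvS 1 (by omega) (by omega))
  · have h2S : v (k - 2) ∈ S := hvS (k - 2) (by omega) (by omega)
    have hadjw : G.Adj w (v (k - 2)) := by
      have := hvadj (k - 2) (by omega)
      have hidx : k - 2 + 1 = k - 1 := by omega
      rw [hidx, hvl] at this
      exact this.symm
    have hlt := hkey w hwS (v (k - 2)) h2S hadjw
    rw [hvl]
    calc ψ (v 1) = ψ (v (k - 2)) :=
          hSeq (v 1) (hvS 1 (by omega) (by omega)) (v (k - 2)) h2S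
      _ < ψ w := hlt
end

section
/- Let G be a graph on vertices v₁, …, v_ℓ with a perfect elimination ordering (v₁, …, v_ℓ). For 1 ≤ k ≤ ℓ define C_{≥k} = {k} ∪ {i : k < i ≤ ℓ and there exists a path v_k v_{j₁} ⋯ v_{j_n} v_i in G with k < j₁ < ⋯ < j_n < i}. If s < t, {v_s, v_t} ∈ E_G, s ∉ C_{≥k} and t ∈ C_{≥k}, then {v_s, v_k} ∈ E_G and s < k. -/
/-! If `t ∈ C_{≥k}` and `t ≠ k`, the last step of a witnessing path enters `t` from some
`p ∈ C_{≥k}` with `p < t`. A smaller neighbour `s ∉ C_{≥k}` of `t` is then adjacent to `p` by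
simpliciality of `t`, and `s < p`, since otherwise appending `s` to the path to `p` would put
`s` into `C_{≥k}`. Descending along `p` in this way reaches `k`. -/

variable {ℓ : ℕ}

/-- `C_{≥k}`: the set containing `k` and all `i > k` reachable from `k` by a path whose
intermediate vertices have strictly increasing indices, all strictly between `k` and `i`. -/
def Cge (G : SimpleGraph (Fin ℓ)) (k : Fin ℓ) : Set (Fin ℓ) :=
  {i | i = k ∨ (k < i ∧ ∃ l : List (Fin ℓ),
    List.Chain G.Adj k (l ++ [i]) ∧ List.Chain' (· < ·) l ∧ ∀ j ∈ l, k < j ∧ j < i)}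

section

variable {G : SimpleGraph (Fin ℓ)} {k p t u : Fin ℓ}

lemma mem_Cge_iff {i : Fin ℓ} :
    i ∈ Cge G k ↔ i = k ∨ (k < i ∧ ∃ l : List (Fin ℓ),
      (k :: (l ++ [i])).IsChain G.Adj ∧ l.IsChain (· < ·) ∧ ∀ j ∈ l, k < j ∧ j < i) :=
  Iff.rfl

lemma mem_Cge_of_adj (hp : p ∈ Cge G k) (hpu : p < u) (hadj : G.Adj p u) : u ∈ Cge G k := by
  rw [mem_Cge_iff] at hp ⊢
  rcases hp with rfl | ⟨hkp, l, hchain, hsorted, hbounds⟩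
  · exact Or.inr ⟨hpu, [], by simpa using hadj, by simp, by simp⟩
  refine Or.inr ⟨hkp.trans hpu, l ++ [p], ?_, ?_, ?_⟩
  · rw [List.append_assoc, List.singleton_append, List.isChain_cons_split]
    exact ⟨hchain, by simpa using hadj⟩
  · refine List.IsChain.append hsorted (by simp) fun x hx y hy => ?_
    obtain rfl : p = y := by simpa using hy
    exact (hbounds x (List.mem_of_getLast? hx)).2
  · intro m hm
    rcases List.mem_append.mp hm with hm | hm
    · exact ⟨(hbounds m hm).1, (hbounds m hm).2.trans hpu⟩
    · rw [List.mem_singleton.mp hm]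
      exact ⟨hkp, hpu⟩

lemma exists_adj_lt_of_mem_Cge (ht : t ∈ Cge G k) (htk : t ≠ k) :
    ∃ p ∈ Cge G k, p < t ∧ G.Adj p t := by
  obtain ⟨hkt, l, hchain, hsorted, hbounds⟩ := (mem_Cge_iff.mp ht).resolve_left htk
  rcases l.eq_nil_or_concat with rfl | ⟨l, j, rfl⟩
  · exact ⟨k, Or.inl rfl, hkt, by simpa using hchain⟩
  rw [List.concat_eq_append] at hchain hsorted hbounds
  rw [List.append_assoc, List.singleton_append, List.isChain_cons_split] at hchain
  have hlt_j : ∀ m ∈ l, m < j := by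
    have := List.isChain_iff_pairwise.mp hsorted
    simp only [List.pairwise_append, List.mem_singleton] at this
    exact fun m hm => this.2.2 m hm j rfl
  have hbounds_l : ∀ m ∈ l, k < m ∧ m < j := fun m hm =>
    ⟨(hbounds m (by simp [hm])).1, hlt_j m hm⟩
  have hj : k < j ∧ j < t := hbounds j (by simp)
  exact ⟨j, Or.inr ⟨hj.1, l, hchain.1, hsorted.left_of_append, hbounds_l⟩, hj.2,
    by simpa using hchain.2⟩

end

theorem stmt8 (G : SimpleGraph (Fin ℓ))
    (hpeo : ∀ t a b : Fin ℓ, a < t → b < t → a ≠ b → G.Adj a t → G.Adj b t → G.Adj a b)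
    (k s t : Fin ℓ) (hst : s < t) (hadj : G.Adj s t)
    (hs : s ∉ Cge G k) (ht : t ∈ Cge G k) :
    G.Adj s k ∧ s < k := by
  induction t using WellFoundedLT.induction with
  | _ t ih =>
    obtain rfl | htk := eq_or_ne t k
    · exact ⟨hadj, hst⟩
    obtain ⟨p, hp, hpt, hpadj⟩ := exists_adj_lt_of_mem_Cge ht htk
    have hsp : s ≠ p := fun h => hs (h ▸ hp)
    have hadj_sp : G.Adj s p := hpeo t s p hst hpt hsp hadj hpadj
    have hs_lt_p : s < p :=
      (lt_or_gt_of_ne hsp).resolve_right fun hps => hs (mem_Cge_of_adj hp hps hadj_sp.symm)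
    exact ih p hpt hs_lt_p hadj_sp hp
end

section
/- Let (G, ψ) be a vertex-weighted graph over subsets of a field K with weighted elimination ordering (v₁, …, v_ℓ), and let C_{≥k} be as above. If s ∈ C_{≥k}, then ψ(v_s) ⊆ ψ(v_k). -/
variable {ℓ : ℕ} {K : Type*} [Field K]

namespace List

variable {α β : Type*}

theorem IsChain.and {R S : α → α → Prop} :
    ∀ {l : List α}, l.IsChain R → l.IsChain S → l.IsChain (fun a b => R a b ∧ S a b)
  | [], _, _ => .nil
  | [a], _, _ => .singleton a
  | _ :: _ :: _, .cons_cons hR tR, .cons_cons hS tS => .cons_cons ⟨hR, hS⟩ (tR.and tS)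

theorem IsChain.apply_concat_le_apply_head [Preorder β] {r : α → α → Prop} {f : α → β}
    (hf : ∀ ⦃x y⦄, r x y → f y ≤ f x) {a b : α} {l : List α} (h : (a :: l ++ [b]).IsChain r) :
    f b ≤ f a :=
  h.backwards_concat_induction (f b ≤ f ·) (a :: l) (fun _ _ hxy hy => hy.trans (hf hxy)) le_rfl
    a mem_cons_self

theorem isChain_lt_cons_append_singleton [Preorder α] {a b : α} {l : List α}
    (hl : l.IsChain (· < ·)) (hbetween : ∀ j ∈ l, a < j ∧ j < b) (hab : a < b) :
    (a :: l ++ [b]).IsChain (· < ·) := by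
  rw [isChain_iff_pairwise] at hl ⊢
  simp only [cons_append, pairwise_cons, mem_append, mem_singleton, pairwise_append]
  grind

end List

theorem stmt10_general (G : SimpleGraph (Fin ℓ)) (ψ : Fin ℓ → Finset K)
    (hdec : ∀ i j : Fin ℓ, i < j → G.Adj i j → ψ j ⊆ ψ i)
    (k s : Fin ℓ) (hs : s ∈ Cge G k) : ψ s ⊆ ψ k := by
  rcases hs with rfl | ⟨hks, l, hadj, hlt, hbetween⟩
  · rfl
  · have hpath : (k :: l ++ [s]).IsChain (fun i j => i < j ∧ G.Adj i j) :=
      (List.isChain_lt_cons_append_singleton hlt hbetween hks).and hadj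
    exact hpath.apply_concat_le_apply_head fun i j h => hdec i j h.1 h.2

theorem stmt10 (G : SimpleGraph (Fin ℓ)) (ψ : Fin ℓ → Finset K)
    (hpeo : ∀ t a b : Fin ℓ, a < t → b < t → a ≠ b → G.Adj a t → G.Adj b t → G.Adj a b)
    (hdec : ∀ i j : Fin ℓ, i < j → G.Adj i j → ψ j ⊆ ψ i)
    (k s : Fin ℓ) (hs : s ∈ Cge G k) : ψ s ⊆ ψ k :=
  stmt10_general G ψ hdec k s hs
end

section
/- Suppose (G, ψ) has a weighted elimination ordering (v₁, …, v_ℓ) with corresponding coordinates x₁, …, x_ℓ (and extra coordinate z). For 1 ≤ k ≤ ℓ define the derivation θ_k = Σ_{i ∈ C_{≥k}} (∏_{j ∈ E_{<k}} (x_j − x_i) ∏_{a ∈ ψ(v_k)} (x_i − a z)) ∂/∂x_i on the polynomial ring K[z, x₁, …, x_ℓ], where E_{<k} = {j : 1 ≤ j < k, {v_j, v_k} ∈ E_G}. Then θ_k(x_s − x_t) lies in the ideal generated by x_s − x_t for every edge {v_s, v_t} ∈ E_G. -/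
open MvPolynomial

variable {ℓ : ℕ} {K : Type*} [Field K]

open Classical in
/-- `E_{<k}`: the set of earlier neighbours of `k`. -/
noncomputable def Elt (G : SimpleGraph (Fin ℓ)) (k : Fin ℓ) : Finset (Fin ℓ) :=
  Finset.univ.filter fun j => j < k ∧ G.Adj j k

open Classical in
/-- The derivation `θ_k` of `K[z, x₁, …, x_ℓ]` (variables indexed by `Option (Fin ℓ)`,
with `none` for `z`), given by
`θ_k = Σ_{i ∈ C_{≥k}} (∏_{j ∈ E_{<k}} (x_j − x_i) ∏_{a ∈ ψ(v_k)} (x_i − a z)) ∂/∂x_i`,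
applied to a polynomial `p`. -/
noncomputable def theta (G : SimpleGraph (Fin ℓ)) (ψ : Fin ℓ → Finset K) (k : Fin ℓ)
    (p : MvPolynomial (Option (Fin ℓ)) K) : MvPolynomial (Option (Fin ℓ)) K :=
  ∑ i : Fin ℓ,
    if i ∈ Cge G k then
      ((∏ j ∈ Elt G k, (X (some j) - X (some i))) *
        ∏ a ∈ ψ k, (X (some i) - C a * X none)) * pderiv (some i) p
    else 0

/-! On `x_s - x_t` the derivation `θ_k` evaluates to `c_s - c_t`, where `c_i` is the coefficient
of `∂/∂x_i` (zero for `i ∉ C_{≥k}`). For `i ∈ C_{≥k}` the coefficient `c_i` is the value at `x_i` of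
one polynomial independent of `i`, so `x_s - x_t ∣ c_s - c_t` when `s, t ∈ C_{≥k}`. If only `s`
lies in `C_{≥k}`, the perfect elimination property, applied along an increasing path from `k`
to `s`, makes `t` an earlier neighbour of `k`, so `x_t - x_s` is a factor of `c_s`. -/

section Combinatorics

variable {G : SimpleGraph (Fin ℓ)} {k : Fin ℓ}

lemma mem_Cge_of_lt_of_adj {i j : Fin ℓ} (hj : j ∈ Cge G k) (hji : j < i) (hadj : G.Adj j i) :
    i ∈ Cge G k := by
  rcases hj with rfl | ⟨hkj, l, hc, hl, hb⟩
  · exact Or.inr ⟨hji, [], List.isChain_pair.mpr hadj, List.isChain_nil, by simp⟩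
  · refine Or.inr ⟨hkj.trans hji, l ++ [j], ?_, ?_, ?_⟩
    · rw [List.append_assoc]
      exact List.isChain_cons_split.mpr ⟨hc, List.isChain_pair.mpr hadj⟩
    · exact List.isChain_iff_pairwise.mpr (List.pairwise_append.mpr
        ⟨List.isChain_iff_pairwise.mp hl, List.pairwise_singleton _ _,
          fun a ha b hb' => List.mem_singleton.mp hb' ▸ (hb a ha).2⟩)
    · intro m hm
      rcases List.mem_append.mp hm with hm | hm
      · exact ⟨(hb m hm).1, (hb m hm).2.trans hji⟩
      · exact List.mem_singleton.mp hm ▸ ⟨hkj, hji⟩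

lemma exists_lt_adj_of_mem_Cge {i : Fin ℓ} (hi : i ∈ Cge G k) (hik : i ≠ k) :
    ∃ j ∈ Cge G k, j < i ∧ G.Adj j i := by
  obtain ⟨hki, l, hc, hl, hb⟩ := hi.resolve_left hik
  induction l using List.reverseRecOn with
  | nil => exact ⟨k, Or.inl rfl, hki, List.isChain_pair.mp hc⟩
  | append_singleton l j _ =>
    rw [List.append_assoc] at hc
    obtain ⟨hc₁, hc₂⟩ := List.isChain_cons_split.mp hc
    have hpw := List.pairwise_append.mp (List.isChain_iff_pairwise.mp hl)
    have hkj : k < j := (hb j (by simp)).1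
    refine ⟨j, Or.inr ⟨hkj, l, hc₁, List.isChain_iff_pairwise.mpr hpw.1, fun m hm =>
      ⟨(hb m (by simp [hm])).1, hpw.2.2 m hm j (by simp)⟩⟩, (hb j (by simp)).2,
      List.isChain_pair.mp hc₂⟩

variable (hpeo : ∀ t a b : Fin ℓ, a < t → b < t → a ≠ b → G.Adj a t → G.Adj b t → G.Adj a b)
include hpeo

/-- Induction down an increasing path from `k`: two smaller neighbours of a vertex are
adjacent by the perfect elimination property. -/
lemma mem_Cge_or_mem_Elt_of_lt_of_adj {i : Fin ℓ} (hi : i ∈ Cge G k) {t : Fin ℓ} (hti : t < i)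
    (hadj : G.Adj t i) : t ∈ Cge G k ∨ t ∈ Elt G k := by
  induction i using WellFoundedLT.induction generalizing t with
  | _ i ih =>
    by_cases hik : i = k
    · subst hik
      exact Or.inr (by simp [Elt, hti, hadj])
    obtain ⟨j, hj, hji, hjadj⟩ := exists_lt_adj_of_mem_Cge hi hik
    by_cases htj : t = j
    · exact Or.inl (htj ▸ hj)
    have htj_adj : G.Adj t j := hpeo i t j hti hji htj hadj hjadj
    rcases lt_or_gt_of_ne htj with htj_lt | hjt
    · exact ih j hji hj htj_lt htj_adj
    · exact Or.inl (mem_Cge_of_lt_of_adj hj hjt htj_adj.symm)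

lemma mem_Elt_of_adj_of_not_mem_Cge {s t : Fin ℓ} (hs : s ∈ Cge G k) (ht : t ∉ Cge G k)
    (hadj : G.Adj s t) : t ∈ Elt G k := by
  rcases lt_or_gt_of_ne (G.ne_of_adj hadj).symm with hts | hst
  · exact (mem_Cge_or_mem_Elt_of_lt_of_adj hpeo hs hts hadj.symm).resolve_left ht
  · exact absurd (mem_Cge_of_lt_of_adj hs hst hadj) ht

end Combinatorics

section Derivation

variable (G : SimpleGraph (Fin ℓ)) (ψ : Fin ℓ → Finset K) (k : Fin ℓ)

noncomputable def thetaCoeff (i : Fin ℓ) : MvPolynomial (Option (Fin ℓ)) K :=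
  (∏ j ∈ Elt G k, (X (some j) - X (some i))) * ∏ a ∈ ψ k, (X (some i) - C a * X none)

lemma theta_sub (p q : MvPolynomial (Option (Fin ℓ)) K) :
    theta G ψ k (p - q) = theta G ψ k p - theta G ψ k q := by
  simp only [theta, map_sub, mul_sub, ← Finset.sum_sub_distrib]
  exact Finset.sum_congr rfl fun i _ => by split_ifs <;> simp

open Classical in
lemma theta_X (i : Fin ℓ) :
    theta G ψ k (X (some i)) = if i ∈ Cge G k then thetaCoeff G ψ k i else 0 := by
  rw [theta, Finset.sum_eq_single i]
  · simp [thetaCoeff]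
  · intro j _ hji
    simp [pderiv_X, hji]
  · simp

lemma sub_dvd_thetaCoeff_sub (s t : Fin ℓ) :
    X (some s) - X (some t) ∣ thetaCoeff G ψ k s - thetaCoeff G ψ k t := by
  let q : Polynomial (MvPolynomial (Option (Fin ℓ)) K) :=
    (∏ j ∈ Elt G k, (Polynomial.C (X (some j)) - Polynomial.X)) *
      ∏ a ∈ ψ k, (Polynomial.X - Polynomial.C (C a * X none))
  have heval (i : Fin ℓ) : q.eval (X (some i)) = thetaCoeff G ψ k i := by
    simp [q, thetaCoeff, Polynomial.eval_prod]
  simpa only [heval] using Polynomial.sub_dvd_eval_sub (X (some s)) (X (some t)) q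

lemma sub_dvd_thetaCoeff_of_mem_Elt {i j : Fin ℓ} (hj : j ∈ Elt G k) :
    X (some j) - X (some i) ∣ thetaCoeff G ψ k i :=
  (Finset.dvd_prod_of_mem (fun j => X (some j) - X (some i)) hj).mul_right _

end Derivation

theorem stmt11_general (G : SimpleGraph (Fin ℓ)) (ψ : Fin ℓ → Finset K)
    (hpeo : ∀ t a b : Fin ℓ, a < t → b < t → a ≠ b → G.Adj a t → G.Adj b t → G.Adj a b)
    (k s t : Fin ℓ) (hadj : G.Adj s t) :
    theta G ψ k (X (some s) - X (some t)) ∈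
      Ideal.span ({X (some s) - X (some t)} : Set (MvPolynomial (Option (Fin ℓ)) K)) := by
  classical
  rw [theta_sub, theta_X, theta_X, Ideal.mem_span_singleton]
  by_cases hs : s ∈ Cge G k <;> by_cases ht : t ∈ Cge G k <;> simp only [hs, ht, if_true, if_false]
  · exact sub_dvd_thetaCoeff_sub G ψ k s t
  · rw [sub_zero, ← neg_sub, neg_dvd]
    exact sub_dvd_thetaCoeff_of_mem_Elt G ψ k (mem_Elt_of_adj_of_not_mem_Cge hpeo hs ht hadj)
  · rw [zero_sub, dvd_neg]
    exact sub_dvd_thetaCoeff_of_mem_Elt G ψ k (mem_Elt_of_adj_of_not_mem_Cge hpeo ht hs hadj.symm)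
  · simp

theorem stmt11 (G : SimpleGraph (Fin ℓ)) (ψ : Fin ℓ → Finset K)
    (hpeo : ∀ t a b : Fin ℓ, a < t → b < t → a ≠ b → G.Adj a t → G.Adj b t → G.Adj a b)
    (hdec : ∀ i j : Fin ℓ, i < j → G.Adj i j → ψ j ⊆ ψ i)
    (k s t : Fin ℓ) (hadj : G.Adj s t) :
    theta G ψ k (X (some s) - X (some t)) ∈
      Ideal.span ({X (some s) - X (some t)} : Set (MvPolynomial (Option (Fin ℓ)) K)) :=
  stmt11_general G ψ hpeo k s t hadj
end

section
/- Suppose (G, ψ) has a weighted elimination ordering (v₁, …, v_ℓ), and define θ_k as above. Then for every s with 1 ≤ s ≤ ℓ and every b ∈ ψ(v_s), the polynomial θ_k(x_s − b z) lies in the ideal of K[z, x₁, …, x_ℓ] generated by x_s − b z. -/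
open MvPolynomial

variable {ℓ : ℕ} {K : Type*} [Field K]

/-! The polynomial `x_s − b z` is linear, so `θ_k` sends it to the coefficient of `∂/∂x_s` in
`θ_k`, which vanishes unless `s ∈ C_{≥k}`. If `s ∈ C_{≥k}`, then `s` is reached from `k` by a
path of increasing indices, and the weight condition `ψ(v_j) ⊆ ψ(v_i)` for edges `i < j`
propagates along it to `ψ(v_s) ⊆ ψ(v_k)`. Hence `b ∈ ψ(v_k)`, and `x_s − b z` is one of the
factors of that coefficient. -/

theorem List.IsChain.and_s12 {α : Type*} {R S : α → α → Prop} {l : List α}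
    (hR : l.IsChain R) (hS : l.IsChain S) : l.IsChain fun a b => R a b ∧ S a b := by
  induction hR with
  | nil => exact .nil
  | singleton a => exact .singleton a
  | cons_cons hab _ ih => exact .cons_cons ⟨hab, hS.rel⟩ (ih hS.tail)

theorem le_of_mem_Cge {β : Type*} [Preorder β] {G : SimpleGraph (Fin ℓ)} {ψ : Fin ℓ → β}
    (hdec : ∀ i j : Fin ℓ, i < j → G.Adj i j → ψ j ≤ ψ i) {k i : Fin ℓ} (hi : i ∈ Cge G k) :
    ψ i ≤ ψ k := by
  obtain rfl | ⟨hki, l, hadj, hlt, hbetween⟩ := hi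
  · exact le_rfl
  have hinc : (k :: (l ++ [i])).IsChain (· < ·) := by
    rw [List.Chain', List.isChain_iff_pairwise] at hlt
    rw [List.isChain_iff_pairwise]
    simp only [List.pairwise_cons, List.pairwise_append, List.mem_append, List.mem_singleton]
    grind
  exact (hinc.and_s12 hadj).cons_induction (fun x => ψ x ≤ ψ k) _
    (fun x y hxy hx => (hdec x y hxy.1 hxy.2).trans hx) le_rfl i (by simp)

open Classical in
theorem theta_X_sub_C_mul_X (G : SimpleGraph (Fin ℓ)) (ψ : Fin ℓ → Finset K) (k s : Fin ℓ)
    (b : K) :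
    theta G ψ k (X (some s) - C b * X none) =
      if s ∈ Cge G k then
        (∏ j ∈ Elt G k, (X (some j) - X (some s))) * ∏ a ∈ ψ k, (X (some s) - C a * X none)
      else 0 := by
  have hpderiv : ∀ i : Fin ℓ,
      pderiv (some i) (X (some s) - C b * X none : MvPolynomial (Option (Fin ℓ)) K) =
        if s = i then 1 else 0 := by
    intro i
    simp [pderiv_X, Pi.single_apply]
  simp only [theta, hpderiv, mul_ite, mul_one, mul_zero, ← ite_and]
  simp only [and_comm, ite_and, Finset.sum_ite_eq, Finset.mem_univ, if_true]

theorem stmt12_general (G : SimpleGraph (Fin ℓ)) (ψ : Fin ℓ → Finset K)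
    (hdec : ∀ i j : Fin ℓ, i < j → G.Adj i j → ψ j ⊆ ψ i)
    (k s : Fin ℓ) (b : K) (hb : b ∈ ψ s) :
    theta G ψ k (X (some s) - C b * X none) ∈
      Ideal.span ({X (some s) - C b * X none} : Set (MvPolynomial (Option (Fin ℓ)) K)) := by
  classical
  rw [theta_X_sub_C_mul_X, Ideal.mem_span_singleton]
  split_ifs with hs
  · exact (Finset.dvd_prod_of_mem _ (le_of_mem_Cge hdec hs hb)).mul_left _
  · exact dvd_zero _

theorem stmt12 (G : SimpleGraph (Fin ℓ)) (ψ : Fin ℓ → Finset K)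
    (hpeo : ∀ t a b : Fin ℓ, a < t → b < t → a ≠ b → G.Adj a t → G.Adj b t → G.Adj a b)
    (hdec : ∀ i j : Fin ℓ, i < j → G.Adj i j → ψ j ⊆ ψ i)
    (k s : Fin ℓ) (b : K) (hb : b ∈ ψ s) :
    theta G ψ k (X (some s) - C b * X none) ∈
      Ideal.span ({X (some s) - C b * X none} : Set (MvPolynomial (Option (Fin ℓ)) K)) :=
  stmt12_general G ψ hdec k s b hb
end

section
/- Suppose (G, ψ) has a weighted elimination ordering (v₁, …, v_ℓ) and define θ_E = z ∂/∂z + Σ_i x_i ∂/∂x_i and θ_k as above. Then the determinant of the (ℓ+1)×(ℓ+1) coefficient matrix with rows indexed by coordinates z, x₁, …, x_ℓ and columns θ_E, θ₁, …, θ_ℓ equals z · ∏_{{v_j,v_k} ∈ E_G} (x_j − x_k) · ∏_{1 ≤ k ≤ ℓ, a ∈ ψ(v_k)} (x_k − a z), the defining polynomial of the ψ-graphical arrangement. -/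
open MvPolynomial

variable {ℓ : ℕ} {K : Type*} [Field K]

lemma mem_Cge_le {G : SimpleGraph (Fin ℓ)} {k m : Fin ℓ} (h : m ∈ Cge G k) : k ≤ m := by
  rcases h with h | h
  · exact h.ge
  · exact h.1.le

lemma self_mem_Cge (G : SimpleGraph (Fin ℓ)) (k : Fin ℓ) : k ∈ Cge G k := Or.inl rfl

open Classical in
lemma theta_X_none (G : SimpleGraph (Fin ℓ)) (ψ : Fin ℓ → Finset K) (k : Fin ℓ) :
    theta G ψ k (X (none : Option (Fin ℓ))) = 0 := by
  unfold theta
  refine Finset.sum_eq_zero fun i _ => ?_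
  rw [pderiv_X_of_ne (by simp), mul_zero, ite_self]

open Classical in
lemma theta_X_some (G : SimpleGraph (Fin ℓ)) (ψ : Fin ℓ → Finset K) (k m : Fin ℓ) :
    theta G ψ k (X (some m)) =
      if m ∈ Cge G k then
        (∏ j ∈ Elt G k, (X (some j) - X (some m))) *
          ∏ a ∈ ψ k, (X (some m) - C a * X (none : Option (Fin ℓ)))
      else 0 := by
  unfold theta
  rw [Finset.sum_eq_single m]
  · by_cases h : m ∈ Cge G k <;> simp [h]
  · intro i _ hne
    have : (some i : Option (Fin ℓ)) ≠ some m := by simpa using hne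
    rw [pderiv_X_of_ne this.symm, mul_zero, ite_self]
  · simp

open Classical in
theorem stmt13 (G : SimpleGraph (Fin ℓ)) (ψ : Fin ℓ → Finset K)
    (hpeo : ∀ t a b : Fin ℓ, a < t → b < t → a ≠ b → G.Adj a t → G.Adj b t → G.Adj a b)
    (hdec : ∀ i j : Fin ℓ, i < j → G.Adj i j → ψ j ⊆ ψ i) :
    (Matrix.of fun (w c : Option (Fin ℓ)) =>
        match c with
        | none => X w
        | some k => theta G ψ k (X w)).det =
      X (none : Option (Fin ℓ)) *
        (∏ p ∈ Finset.univ.filter (fun p : Fin ℓ × Fin ℓ => p.1 < p.2 ∧ G.Adj p.1 p.2),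
          (X (some p.1) - X (some p.2))) *
        ∏ k : Fin ℓ, ∏ a ∈ ψ k, (X (some k) - C a * X (none : Option (Fin ℓ))) := by
  set M : Matrix (Option (Fin ℓ)) (Option (Fin ℓ)) (MvPolynomial (Option (Fin ℓ)) K) :=
    Matrix.of fun (w c : Option (Fin ℓ)) =>
        match c with
        | none => X w
        | some k => theta G ψ k (X w) with hMdef
  set e : Fin (ℓ + 1) ≃ Option (Fin ℓ) := _root_.finSuccEquiv ℓ with he
  have hdet : M.det = (M.submatrix e e).det := (Matrix.det_submatrix_equiv_self e M).symm
  rw [hdet, Matrix.det_of_lowerTriangular]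
  · -- compute the product of diagonal entries
    rw [Fin.prod_univ_succ]
    have h0 : (M.submatrix e e) 0 0 = X (none : Option (Fin ℓ)) := by
      simp [M, e, Matrix.submatrix_apply]
    have hk : ∀ k : Fin ℓ, (M.submatrix e e) k.succ k.succ =
        (∏ j ∈ Elt G k, (X (some j) - X (some k))) *
          ∏ a ∈ ψ k, (X (some k) - C a * X (none : Option (Fin ℓ))) := by
      intro k
      have : (M.submatrix e e) k.succ k.succ = theta G ψ k (X (some k)) := by
        simp [M, e, Matrix.submatrix_apply]
      rw [this, theta_X_some, if_pos (self_mem_Cge G k)]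
    rw [h0]
    have hprod : ∀ k : Fin ℓ, (M.submatrix e e) k.succ k.succ =
        (∏ j ∈ Elt G k, (X (some j) - X (some k))) *
          ∏ a ∈ ψ k, (X (some k) - C a * X (none : Option (Fin ℓ))) := hk
    rw [Finset.prod_congr rfl fun k _ => hprod k, Finset.prod_mul_distrib, ← mul_assoc]
    congr 2
    refine (Finset.prod_finset_product_right _ Finset.univ (fun k => Elt G k) ?_
      (f := fun p : Fin ℓ × Fin ℓ => (X (some p.1) - X (some p.2) :
        MvPolynomial (Option (Fin ℓ)) K))).symm
    intro p
    simp [Elt]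
  · -- lower triangularity
    intro i j hij
    have hij' : i < j := hij
    rw [Matrix.submatrix_apply]
    -- j ≠ 0 since i < j
    rcases Fin.eq_zero_or_eq_succ j with rfl | ⟨k, rfl⟩
    · exact absurd hij' (Fin.not_lt_zero i)
    rcases Fin.eq_zero_or_eq_succ i with rfl | ⟨m, rfl⟩
    · simpa [M, e] using theta_X_none G ψ k
    · have hmk : m < k := by
        have := hij'
        simpa [Fin.succ_lt_succ_iff] using this
      have hnot : m ∉ Cge G k := fun h => absurd (mem_Cge_le h) (not_le.mpr hmk)
      simp only [M, e, finSuccEquiv_succ, Matrix.of_apply]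
      rw [theta_X_some, if_neg hnot]
end

section
/- Let G be a finite simple graph, ψ : V_G → (finite subsets of K), S an induced subgraph of G, and ψ_S the restriction of ψ. Then the ψ_S-graphical arrangement A_{S,ψ_S} is a localization of A_{G,ψ}: there exists X in the intersection lattice L(A_{G,ψ}) with A_{S,ψ_S} = {H ∈ A_{G,ψ} : H ⊇ X}. -/
variable {ℓ : ℕ} {K : Type*} [Field K]

/-- The coordinate function on `K^{Option (Fin ℓ)}`; `none` indexes the coordinate `z`
and `some i` the coordinate `x_i`. -/
def coordFn (w : Option (Fin ℓ)) : (Option (Fin ℓ) → K) →ₗ[K] K := LinearMap.proj w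

/-- The hyperplanes of the ψ-graphical arrangement `A_{G,ψ}` in `K^{ℓ+1}`:
`{z = 0}`, `{x_s − x_t = 0}` for edges `{s,t} ∈ E_G`, `{x_i = a z}` for `a ∈ ψ(i)`. -/
def ArrHyps (G : SimpleGraph (Fin ℓ)) (ψ : Fin ℓ → Finset K) :
    Set (Submodule K (Option (Fin ℓ) → K)) :=
  {LinearMap.ker (coordFn none)} ∪
    {H | ∃ s t, G.Adj s t ∧ H = LinearMap.ker (coordFn (some s) - coordFn (some t))} ∪
    {H | ∃ i a, a ∈ ψ i ∧ H = LinearMap.ker (coordFn (some i) - a • coordFn none)}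

/-- The hyperplanes of `A_{S,ψ_S}` for the subgraph `S` of `G` induced on `s`. -/
def ArrHypsInduced (G : SimpleGraph (Fin ℓ)) (ψ : Fin ℓ → Finset K) (s : Finset (Fin ℓ)) :
    Set (Submodule K (Option (Fin ℓ) → K)) :=
  {LinearMap.ker (coordFn none)} ∪
    {H | ∃ a b, a ∈ s ∧ b ∈ s ∧ G.Adj a b ∧
      H = LinearMap.ker (coordFn (some a) - coordFn (some b))} ∪
    {H | ∃ i a, i ∈ s ∧ a ∈ ψ i ∧ H = LinearMap.ker (coordFn (some i) - a • coordFn none)}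

/-!
The localization is at `X := ⋂ A_{S,ψ_S}`. Every hyperplane of `A_{S,ψ_S}` contains `X`; for the
converse, choose `v ∈ X` with `z = 0`, `x_i = 0` exactly for `i ∈ V_S`, and pairwise distinct
coordinates off `V_S`. Then `v` lies on no hyperplane `x_i = a z` with `i ∉ V_S` and on no
`x_i = x_j` with an edge leaving `V_S`, so no hyperplane outside `A_{S,ψ_S}` contains `X`.
-/

@[simp]
lemma coordFn_apply (w : Option (Fin ℓ)) (v : Option (Fin ℓ) → K) : coordFn w v = v w := rfl

lemma arrHypsInduced_subset_arrHyps (G : SimpleGraph (Fin ℓ)) (ψ : Fin ℓ → Finset K)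
    (s : Finset (Fin ℓ)) : ArrHypsInduced G ψ s ⊆ ArrHyps G ψ := by
  rintro H ((hz | ⟨a, b, -, -, hab, rfl⟩) | ⟨i, a, -, ha, rfl⟩)
  · exact Or.inl (Or.inl hz)
  · exact Or.inl (Or.inr ⟨a, b, hab, rfl⟩)
  · exact Or.inr ⟨i, a, ha, rfl⟩

/-- A vector with `z = 0`, vanishing exactly on the coordinates of `s`, and with pairwise distinct
coordinates off `s`. -/
structure IsSeparatingWitness (s : Finset (Fin ℓ)) (v : Option (Fin ℓ) → K) : Prop where
  apply_none : v none = 0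
  apply_some_eq_zero_iff (i : Fin ℓ) : v (some i) = 0 ↔ i ∈ s
  injOn : Set.InjOn (fun i => v (some i)) (↑s)ᶜ

lemma exists_isSeparatingWitness [Infinite K] (s : Finset (Fin ℓ)) :
    ∃ v : Option (Fin ℓ) → K, IsSeparatingWitness s v := by
  classical
  set e := Infinite.natEmbedding K
  refine ⟨fun w => w.elim 0 fun i => if i ∈ s then 0 else e (i + 1) - e 0, rfl, ?_, ?_⟩
  · intro i
    by_cases hi : i ∈ s
    · simp [hi]
    · simp [hi, sub_eq_zero, e.injective.eq_iff]
  · intro i hi j hj hij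
    simp only [Set.mem_compl_iff, Finset.mem_coe] at hi hj
    simpa [hi, hj, e.injective.eq_iff, Fin.val_inj] using hij

namespace IsSeparatingWitness

variable {s : Finset (Fin ℓ)} {v : Option (Fin ℓ) → K}

lemma mem_sInf_arrHypsInduced (hv : IsSeparatingWitness s v) (G : SimpleGraph (Fin ℓ))
    (ψ : Fin ℓ → Finset K) : v ∈ sInf (ArrHypsInduced G ψ s) := by
  have hvs : ∀ i ∈ s, v (some i) = 0 := fun i hi => (hv.apply_some_eq_zero_iff i).2 hi
  rw [Submodule.mem_sInf]
  rintro H ((rfl | ⟨a, b, ha, hb, -, rfl⟩) | ⟨i, a, hi, -, rfl⟩)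
  · simp [hv.apply_none]
  · simp [hvs a ha, hvs b hb]
  · simp [hvs i hi, hv.apply_none]

lemma mem_arrHypsInduced (hv : IsSeparatingWitness s v) {G : SimpleGraph (Fin ℓ)}
    {ψ : Fin ℓ → Finset K} {H : Submodule K (Option (Fin ℓ) → K)} (hH : H ∈ ArrHyps G ψ)
    (hvH : v ∈ H) : H ∈ ArrHypsInduced G ψ s := by
  rcases hH with (hz | ⟨a, b, hab, rfl⟩) | ⟨i, a, ha, rfl⟩
  · exact Or.inl (Or.inl hz)
  · have hvab : v (some a) = v (some b) := by simpa [sub_eq_zero] using hvH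
    have hbs_iff : a ∈ s ↔ b ∈ s := by
      rw [← hv.apply_some_eq_zero_iff, ← hv.apply_some_eq_zero_iff, hvab]
    by_cases has : a ∈ s
    · exact Or.inl (Or.inr ⟨a, b, has, hbs_iff.1 has, hab, rfl⟩)
    · exact absurd (hv.injOn (by simpa using has) (by simpa [← hbs_iff] using has) hvab) hab.ne
  · have hvi : v (some i) = 0 := by simpa [sub_eq_zero, hv.apply_none] using hvH
    exact Or.inr ⟨i, a, (hv.apply_some_eq_zero_iff i).1 hvi, ha, rfl⟩

end IsSeparatingWitness

/-- `A_{S,ψ_S}` is a localization of `A_{G,ψ}`: it equals `{H ∈ A_{G,ψ} : H ⊇ X}` for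
some `X` in the intersection lattice of `A_{G,ψ}`. -/
theorem stmt15 [Infinite K] (G : SimpleGraph (Fin ℓ)) (ψ : Fin ℓ → Finset K)
    (s : Finset (Fin ℓ)) :
    ∃ B ⊆ ArrHyps G ψ,
      {H ∈ ArrHyps G ψ | sInf B ≤ H} = ArrHypsInduced G ψ s := by
  obtain ⟨v, hv⟩ := exists_isSeparatingWitness (K := K) s
  refine ⟨ArrHypsInduced G ψ s, arrHypsInduced_subset_arrHyps G ψ s, ?_⟩
  ext H
  constructor
  · rintro ⟨hH, hle⟩
    exact hv.mem_arrHypsInduced hH (hle (hv.mem_sInf_arrHypsInduced G ψ))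
  · intro hH
    exact ⟨arrHypsInduced_subset_arrHyps G ψ s hH, sInf_le hH⟩
end

section
/- Let G be a finite simple graph, ψ : V_G → (finite subsets of K), and S an induced subgraph of G. Then the simple graphical arrangement A_S = {{x_i − x_j = 0} : {i,j} ∈ E_S} is a localization of the ψ-graphical arrangement A_{G,ψ}. -/
variable {ℓ : ℕ} {K : Type*} [Field K]

/-- The hyperplanes of the simple graphical arrangement `A_S` of the subgraph of `G`
induced on `s`. -/
def GraphHypsInduced (G : SimpleGraph (Fin ℓ)) (s : Finset (Fin ℓ)) :
    Set (Submodule K (Option (Fin ℓ) → K)) :=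
  {H | ∃ a b, a ∈ s ∧ b ∈ s ∧ G.Adj a b ∧
    H = LinearMap.ker (coordFn (some a) - coordFn (some b))}

/-- The graphical arrangement `A_S` of an induced subgraph is a localization of `A_{G,ψ}`. -/
theorem stmt16 [Infinite K] (G : SimpleGraph (Fin ℓ)) (ψ : Fin ℓ → Finset K)
    (s : Finset (Fin ℓ)) :
    ∃ B ⊆ ArrHyps G ψ,
      {H ∈ ArrHyps G ψ | sInf B ≤ H} = GraphHypsInduced (K := K) G s := by
  refine ⟨GraphHypsInduced (K := K) G s, ?_, ?_⟩
  · rintro H ⟨a, b, _, _, hadj, rfl⟩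
    exact Or.inl (Or.inr ⟨a, b, hadj, rfl⟩)
  · -- auxiliary membership facts
    have hnone : (fun w => if w = none then (1:K) else 0) ∈
        sInf (GraphHypsInduced (K := K) G s) := by
      rw [Submodule.mem_sInf]
      rintro p ⟨x, y, _, _, _, rfl⟩
      simp [coordFn, LinearMap.mem_ker]
    have hones : (fun w => if w = none then (0:K) else 1) ∈
        sInf (GraphHypsInduced (K := K) G s) := by
      rw [Submodule.mem_sInf]
      rintro p ⟨x, y, _, _, _, rfl⟩
      simp [coordFn, LinearMap.mem_ker]
    have hout : ∀ u : Fin ℓ, u ∉ s →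
        (fun w => if w = some u then (1:K) else 0) ∈
          sInf (GraphHypsInduced (K := K) G s) := by
      intro u hu
      rw [Submodule.mem_sInf]
      rintro p ⟨x, y, hx, hy, _, rfl⟩
      have hxu : x ≠ u := fun h => hu (h ▸ hx)
      have hyu : y ≠ u := fun h => hu (h ▸ hy)
      simp [coordFn, LinearMap.mem_ker, hxu, hyu]
    ext H
    simp only [Set.mem_setOf_eq, Set.mem_sep_iff]
    constructor
    · rintro ⟨hA, hle⟩
      rcases hA with (h | ⟨u, v, huv, rfl⟩) | ⟨i, a, _, rfl⟩
      · exfalso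
        rw [Set.mem_singleton_iff] at h
        subst h
        have := hle hnone
        simp [coordFn, LinearMap.mem_ker] at this
      · have hu : u ∈ s := by
          by_contra hu
          have := hle (hout u hu)
          have hne : v ≠ u := (G.ne_of_adj huv).symm
          simp [coordFn, LinearMap.mem_ker, hne] at this
        have hv : v ∈ s := by
          by_contra hv
          have := hle (hout v hv)
          have hne : u ≠ v := G.ne_of_adj huv
          simp [coordFn, LinearMap.mem_ker, hne] at this
        exact ⟨u, v, hu, hv, huv, rfl⟩
      · exfalso
        have := hle hones
        simp [coordFn, LinearMap.mem_ker] at this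
    · rintro hH
      refine ⟨?_, sInf_le hH⟩
      obtain ⟨a, b, _, _, hadj, rfl⟩ := hH
      exact Or.inl (Or.inr ⟨a, b, hadj, rfl⟩)
end
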